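/- arXiv:0911.0508 — 2 statements merged into one kernel-verified Lean document; each statement's English description precedes it below -/
import Mathlib

section
/- Let b be a finite set, let o_r be a permutation of b, and let a ⊆ b. Then the maximum, over all permutations o of a, of |o ∧ o_r| equals the largest integer t such that every one of the first t elements of o_r belongs to a. -/
/-- Length of the longest common prefix of two lists. -/
def lcp {α : Type*} [DecidableEq α] : List α → List α → ℕ
  | a :: p, b :: q => if a = b then lcp p q + 1 else 0
  | _, _ => 0

/-- `p` is a permutation of the finite set `s`: a duplicate-free list whose
set of elements is exactly `s`. -/
def IsPermOf {α : Type*} [DecidableEq α] (p : List α) (s : Finset α) : Prop :=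
  p.Nodup ∧ p.toFinset = s

lemma lcp_le_right {α : Type*} [DecidableEq α] :
    ∀ p q : List α, lcp p q ≤ q.length
  | [], [] => le_refl _
  | [], _ :: _ => Nat.zero_le _
  | _ :: _, [] => le_refl _
  | a :: p, b :: q => by
      simp only [lcp]
      split
      · simpa using lcp_le_right p q
      · exact Nat.zero_le _

lemma mem_take_lcp {α : Type*} [DecidableEq α] :
    ∀ (p q : List α) (x : α), x ∈ q.take (lcp p q) → x ∈ p
  | [], [], x => by simp [lcp]
  | [], _ :: _, x => by simp [lcp]
  | _ :: _, [], x => by simp [lcp]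
  | a :: p, b :: q, x => by
      simp only [lcp]
      split
      · rename_i h
        intro hx
        rw [List.take_succ_cons] at hx
        rcases List.mem_cons.1 hx with h1 | h1
        · exact h1 ▸ h ▸ List.mem_cons_self
        · exact List.mem_cons_of_mem _ (mem_take_lcp p q x h1)
      · simp

lemma le_lcp_append {α : Type*} [DecidableEq α] :
    ∀ (p r s : List α), p.length ≤ lcp (p ++ r) (p ++ s)
  | [], r, s => Nat.zero_le _
  | a :: p, r, s => by
      simp only [List.cons_append, lcp, if_pos rfl, List.length_cons]
      exact Nat.succ_le_succ (le_lcp_append p r s)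

/-- Let `b` be a finite set, `or` a permutation of `b`, and `a ⊆ b`. The
maximum over all permutations `o` of `a` of `|o ∧ or|` equals the largest
integer `t` such that every one of the first `t` elements of `or` belongs
to `a`. -/
theorem stmt3 {α : Type*} [DecidableEq α] (b a : Finset α) (or : List α)
    (hor : IsPermOf or b) (hab : a ⊆ b) :
    sSup {n : ℕ | ∃ o : List α, IsPermOf o a ∧ lcp o or = n}
      = sSup {t : ℕ | t ≤ or.length ∧ ∀ x ∈ or.take t, x ∈ a} := by
  set S1 := {n : ℕ | ∃ o : List α, IsPermOf o a ∧ lcp o or = n} with hS1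
  set S2 := {t : ℕ | t ≤ or.length ∧ ∀ x ∈ or.take t, x ∈ a} with hS2
  have hS1bdd : BddAbove S1 := by
    refine ⟨or.length, fun n hn => ?_⟩
    obtain ⟨o, _, rfl⟩ := hn
    exact lcp_le_right o or
  have hS2bdd : BddAbove S2 := ⟨or.length, fun t ht => ht.1⟩
  have hS2ne : S2.Nonempty := ⟨0, Nat.zero_le _, by simp⟩
  have hS1sub : S1 ⊆ S2 := by
    rintro n ⟨o, ho, rfl⟩
    refine ⟨lcp_le_right o or, fun x hx => ?_⟩
    have : x ∈ o := mem_take_lcp o or x hx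
    rw [← ho.2]
    exact List.mem_toFinset.2 this
  apply le_antisymm
  · rcases Set.eq_empty_or_nonempty S1 with h | h
    · simp [h]
    · exact csSup_le h fun n hn => le_csSup hS2bdd (hS1sub hn)
  · set T := sSup S2 with hT
    have hTmem : T ∈ S2 := Nat.sSup_mem hS2ne hS2bdd
    obtain ⟨hTlen, hTa⟩ := hTmem
    -- construct witness permutation
    set t := or.take T with ht
    have htsub : t.toFinset ⊆ a := by
      intro x hx
      exact hTa x (List.mem_toFinset.1 hx)
    set o := t ++ (a \ t.toFinset).toList with hodef
    have honodup : o.Nodup := by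
      refine List.Nodup.append (hor.1.sublist (List.take_sublist _ _))
        (Finset.nodup_toList _) ?_
      intro x hx hx'
      have : x ∈ a \ t.toFinset := Finset.mem_toList.1 hx'
      exact (Finset.mem_sdiff.1 this).2 (List.mem_toFinset.2 hx)
    have hofin : o.toFinset = a := by
      rw [hodef, List.toFinset_append, Finset.toList_toFinset]
      exact Finset.union_sdiff_of_subset htsub
    have hlcp : T ≤ lcp o or := by
      have : or = t ++ or.drop T := (List.take_append_drop T or).symm
      have h2 : t.length = T := by
        rw [ht, List.length_take]
        exact min_eq_left hTlen
      calc T = t.length := h2.symm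
        _ ≤ lcp (t ++ (a \ t.toFinset).toList) (t ++ or.drop T) := le_lcp_append _ _ _
        _ = lcp o or := by rw [← this]
    exact le_trans hlcp (le_csSup hS1bdd ⟨o, ⟨honodup, hofin⟩, rfl⟩)
end

section
/- Let a path instance of the Common Prefix Problem with the identity benefit function f(t) = t be given, let c = s_1 ∩ s_2 ∩ … ∩ s_n, and let s'_x = s_x \ c for each x. Then OPT = OPT' + (n−1)·|c|, where OPT is the maximum benefit for the instance with sets s_1, …, s_n and OPT' is the maximum benefit for the instance with sets s'_1, …, s'_n. -/
/-- Benefit, for the identity benefit function `f(t) = t`, of an assignment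
`p` of permutations to the vertices `v_1, …, v_n` of a path:
`Σ_{x=1}^{n-1} |p_x ∧ p_{x+1}|`. -/
def natPathBenefit {α : Type*} [DecidableEq α] (n : ℕ) (p : ℕ → List α) : ℕ :=
  ∑ x ∈ Finset.Ico 1 n, lcp (p x) (p (x + 1))

lemma lcp_le_length {α : Type*} [DecidableEq α] : ∀ p q : List α, lcp p q ≤ p.length
  | [], _ => by simp [lcp]
  | a :: p, [] => by simp [lcp]
  | a :: p, b :: q => by
    by_cases h : a = b
    · simp only [lcp, if_pos h, List.length_cons]
      exact Nat.succ_le_succ (lcp_le_length p q)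
    · simp [lcp, h]

lemma lcp_append {α : Type*} [DecidableEq α] (r p q : List α) :
    lcp (r ++ p) (r ++ q) = r.length + lcp p q := by
  induction r with
  | nil => cases p <;> cases q <;> simp [lcp]
  | cons a r ih => simp [lcp, ih]; omega

lemma lcp_filter {α : Type*} [DecidableEq α] (f : α → Bool) :
    ∀ p q : List α, lcp p q ≤ lcp (p.filter f) (q.filter f)
      + (p.filter (fun a => !f a)).length
  | [], q => by simp [lcp]
  | a :: p, [] => by simp [lcp]
  | a :: p, b :: q => by
    by_cases h : a = b
    · subst h
      cases hf : f a <;>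
      · simp only [lcp, List.filter_cons, hf, Bool.not_false, Bool.not_true,
          if_true, if_false, List.length_cons, if_pos rfl]
        simp only [show (false = true) = False from by simp, if_false,
          show (true = true) = True from by simp, if_true]
        have := lcp_filter f p q
        omega
    · simp [lcp, h]

lemma benefit_bdd {α : Type*} [DecidableEq α] (n : ℕ) (t : ℕ → Finset α) :
    BddAbove {b : ℕ | ∃ p : ℕ → List α,
      (∀ x ∈ Finset.Icc (1:ℕ) n, IsPermOf (p x) (t x)) ∧ natPathBenefit n p = b} := by
  refine ⟨∑ x ∈ Finset.Ico 1 n, (t x).card, ?_⟩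
  rintro b ⟨p, hp, rfl⟩
  apply Finset.sum_le_sum
  intro x hx
  have hx' : x ∈ Finset.Icc 1 n := by
    rw [Finset.mem_Ico] at hx; rw [Finset.mem_Icc]; omega
  obtain ⟨hnd, hft⟩ := hp x hx'
  calc lcp (p x) (p (x+1)) ≤ (p x).length := lcp_le_length _ _
    _ = (t x).card := by rw [← hft, List.toFinset_card_of_nodup hnd]

lemma benefit_nonempty {α : Type*} [DecidableEq α] (n : ℕ) (t : ℕ → Finset α) :
    Set.Nonempty {b : ℕ | ∃ p : ℕ → List α,
      (∀ x ∈ Finset.Icc (1:ℕ) n, IsPermOf (p x) (t x)) ∧ natPathBenefit n p = b} :=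
  ⟨natPathBenefit n (fun x => (t x).toList), fun x => (t x).toList,
    fun x _ => ⟨Finset.nodup_toList _, Finset.toList_toFinset _⟩, rfl⟩

/-- For a path instance with identity benefit function, with
`c = s_1 ∩ … ∩ s_n` and `s'_x = s_x \ c`:
`OPT = OPT' + (n-1)·|c|`, where `OPT` is the maximum benefit for the sets
`s_1, …, s_n` and `OPT'` that for the sets `s'_1, …, s'_n`. -/
theorem stmt13 {α : Type*} [DecidableEq α] (n : ℕ) (hn : 1 ≤ n)
    (s : ℕ → Finset α) :
    sSup {b : ℕ | ∃ p : ℕ → List α,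
        (∀ x ∈ Finset.Icc (1 : ℕ) n, IsPermOf (p x) (s x)) ∧
        natPathBenefit n p = b}
      = sSup {b : ℕ | ∃ p : ℕ → List α,
          (∀ x ∈ Finset.Icc (1 : ℕ) n, IsPermOf (p x)
            (s x \ ((s 1).filter fun v => ∀ y ∈ Finset.Icc (1 : ℕ) n, v ∈ s y))) ∧
          natPathBenefit n p = b}
        + (n - 1) * ((s 1).filter fun v => ∀ y ∈ Finset.Icc (1 : ℕ) n, v ∈ s y).card := by
  set c := (s 1).filter fun v => ∀ y ∈ Finset.Icc (1 : ℕ) n, v ∈ s y with hc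
  have hcsub : ∀ x ∈ Finset.Icc (1:ℕ) n, c ⊆ s x := by
    intro x hx v hv
    exact (Finset.mem_filter.1 hv).2 x hx
  have hSne := benefit_nonempty n s
  have hSbdd := benefit_bdd n s
  have hTne := benefit_nonempty n (fun x => s x \ c)
  have hTbdd := benefit_bdd n (fun x => s x \ c)
  apply le_antisymm
  · -- OPT ≤ OPT' + (n-1)|c|
    obtain ⟨p, hp, hpb⟩ := Nat.sSup_mem hSne hSbdd
    set p' : ℕ → List α := fun x => (p x).filter (fun a => decide (a ∉ c)) with hp'def
    have hp' : ∀ x ∈ Finset.Icc (1:ℕ) n, IsPermOf (p' x) (s x \ c) := by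
      intro x hx
      obtain ⟨hnd, hft⟩ := hp x hx
      refine ⟨hnd.filter _, ?_⟩
      rw [hp'def]
      simp only [List.toFinset_filter]
      ext a
      simp [hft, Finset.mem_sdiff]
    have hcount : ∀ x ∈ Finset.Icc (1:ℕ) n,
        ((p x).filter (fun a => decide (a ∈ c))).length = c.card := by
      intro x hx
      obtain ⟨hnd, hft⟩ := hp x hx
      have hnd' := hnd.filter (fun a => decide (a ∈ c))
      rw [← List.toFinset_card_of_nodup hnd']
      congr 1
      rw [List.toFinset_filter, hft]
      ext a
      simp only [Finset.mem_filter, decide_eq_true_eq]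
      exact ⟨fun h => h.2, fun h => ⟨hcsub x hx h, h⟩⟩
    have hbenefit : natPathBenefit n p ≤ natPathBenefit n p' + (n-1) * c.card := by
      unfold natPathBenefit
      calc ∑ x ∈ Finset.Ico 1 n, lcp (p x) (p (x+1))
          ≤ ∑ x ∈ Finset.Ico 1 n, (lcp (p' x) (p' (x+1)) + c.card) := by
            apply Finset.sum_le_sum
            intro x hx
            rw [Finset.mem_Ico] at hx
            have hx' : x ∈ Finset.Icc 1 n := Finset.mem_Icc.2 ⟨hx.1, le_of_lt hx.2⟩
            have hb := lcp_filter (fun a => decide (a ∉ c)) (p x) (p (x+1))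
            have heq : (p x).filter (fun a => !decide (a ∉ c))
                = (p x).filter (fun a => decide (a ∈ c)) := by
              apply List.filter_congr
              intro a _
              simp
            rw [heq, hcount x hx'] at hb
            exact hb
        _ = (∑ x ∈ Finset.Ico 1 n, lcp (p' x) (p' (x+1))) + (n-1) * c.card := by
            rw [Finset.sum_add_distrib, Finset.sum_const, Nat.card_Ico, smul_eq_mul]
    have hmem : natPathBenefit n p' ∈ {b : ℕ | ∃ p : ℕ → List α,
        (∀ x ∈ Finset.Icc (1 : ℕ) n, IsPermOf (p x) (s x \ c)) ∧
        natPathBenefit n p = b} := ⟨p', hp', rfl⟩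
    calc sSup _ = natPathBenefit n p := hpb.symm
      _ ≤ natPathBenefit n p' + (n-1) * c.card := hbenefit
      _ ≤ _ + (n-1) * c.card := by
          exact Nat.add_le_add_right (le_csSup hTbdd hmem) _
  · -- OPT' + (n-1)|c| ≤ OPT
    obtain ⟨p', hp', hpb'⟩ := Nat.sSup_mem hTne hTbdd
    set p : ℕ → List α := fun x => c.toList ++ p' x with hpdef
    have hp : ∀ x ∈ Finset.Icc (1:ℕ) n, IsPermOf (p x) (s x) := by
      intro x hx
      obtain ⟨hnd, hft⟩ := hp' x hx
      constructor
      · refine (Finset.nodup_toList c).append hnd ?_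
        intro a hac hap
        have h1 : a ∈ c := Finset.mem_toList.1 hac
        have h2 : a ∈ (p' x).toFinset := List.mem_toFinset.2 hap
        rw [hft] at h2
        exact (Finset.mem_sdiff.1 h2).2 h1
      · rw [hpdef]
        simp only [List.toFinset_append, Finset.toList_toFinset, hft]
        exact Finset.union_sdiff_of_subset (hcsub x hx)
    have hbenefit : natPathBenefit n p = natPathBenefit n p' + (n-1) * c.card := by
      unfold natPathBenefit
      have : ∀ x ∈ Finset.Ico 1 n,
          lcp (p x) (p (x+1)) = lcp (p' x) (p' (x+1)) + c.card := by
        intro x hx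
        rw [hpdef]
        simp only []
        rw [lcp_append, Finset.length_toList]
        exact Nat.add_comm _ _
      rw [Finset.sum_congr rfl this, Finset.sum_add_distrib, Finset.sum_const,
        Nat.card_Ico, smul_eq_mul]
    have hmem : natPathBenefit n p ∈ {b : ℕ | ∃ p : ℕ → List α,
        (∀ x ∈ Finset.Icc (1 : ℕ) n, IsPermOf (p x) (s x)) ∧
        natPathBenefit n p = b} := ⟨p, hp, rfl⟩
    calc sSup _ + (n-1) * c.card = natPathBenefit n p' + (n-1) * c.card := by rw [hpb']
      _ = natPathBenefit n p := hbenefit.symm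
      _ ≤ _ := le_csSup hSbdd hmem
end
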